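/- arXiv:2409.01340 — 3 statements merged into one kernel-verified Lean document; each statement's English description precedes it below -/
import Mathlib

section
/- Let f : ℝ^d → ℝ be smooth with compact support, let λ : ℝ^d → ℝ and p : ℝ^d → ℝ be continuously differentiable, and let ν_J be a finite Borel measure on ℝ^d with compact support. Then ∫_{ℝ^d} λ(x) p(x) ( ∫_{ℝ^d} ∫_0^1 z · (∇f)(x + θz) dθ ν_J(dz) ) dx = - ∫_{ℝ^d} f(x) ( ∫_{ℝ^d} ∫_0^1 z · ∇(λp)(x - θz) dθ ν_J(dz) ) dx, where ∇(λp)(x - θz) denotes the gradient of the product function λp evaluated at x - θz, and both iterated integrals are absolutely convergent. -/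
open MeasureTheory Filter Set
open scoped Pointwise
open scoped RealInnerProductSpace

noncomputable section

section Aux

variable {d : ℕ}

local notation "E" => EuclideanSpace ℝ (Fin d)

/-- FTC: the θ-integral of the directional derivative along a segment. -/
lemma key_ftc (h : E → ℝ) (hh : ContDiff ℝ 1 h) (x z : E) :
    (∫ θ in (0:ℝ)..1, ⟪z, gradient h (x + θ • z)⟫) = h (x + z) - h x := by
  have hgradcont : Continuous (gradient h) := by
    have : Continuous (fderiv ℝ h) := hh.continuous_fderiv one_ne_zero
    exact (InnerProductSpace.toDual ℝ E).symm.continuous.comp this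
  have hderiv : ∀ t ∈ Set.uIcc (0:ℝ) 1,
      HasDerivAt (fun θ : ℝ => h (x + θ • z)) ⟪z, gradient h (x + t • z)⟫ t := by
    intro t _
    have h1 : HasDerivAt (fun θ : ℝ => x + θ • z) z t := by
      simpa using ((hasDerivAt_id t).smul_const z).const_add x
    have h2 : HasFDerivAt h (fderiv ℝ h (x + t • z)) (x + t • z) :=
      ((hh.differentiable one_ne_zero) (x + t • z)).hasFDerivAt
    have h3 := h2.comp_hasDerivAt t h1
    have h4 : ⟪z, gradient h (x + t • z)⟫ = fderiv ℝ h (x + t • z) z := by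
      rw [real_inner_comm]
      exact InnerProductSpace.toDual_symm_apply
    rw [h4]
    exact h3
  have hint : IntervalIntegrable (fun t : ℝ => ⟪z, gradient h (x + t • z)⟫)
      MeasureTheory.volume 0 1 := by
    apply Continuous.intervalIntegrable
    exact continuous_const.inner
      (hgradcont.comp (continuous_const.add (continuous_id.smul continuous_const)))
  have := intervalIntegral.integral_eq_sub_of_hasDerivAt hderiv hint
  simpa using this

lemma key_ftc' (h : E → ℝ) (hh : ContDiff ℝ 1 h) (x z : E) :
    (∫ θ in (0:ℝ)..1, ⟪z, gradient h (x - θ • z)⟫) = h x - h (x - z) := by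
  have e1 : ∀ θ : ℝ, ⟪z, gradient h (x - θ • z)⟫
      = -⟪(-z : E), gradient h (x + θ • (-z))⟫ := by
    intro θ
    rw [smul_neg, ← sub_eq_add_neg, inner_neg_left]
    ring
  simp only [e1]
  rw [intervalIntegral.integral_neg, key_ftc h hh x (-z), ← sub_eq_add_neg]
  ring

end Aux

/-- Adjoint (integration-by-parts plus translation) identity for the
Taylor-rewritten jump part `λ(x) ∫ z·∫₀¹ ∇f(x+θz) dθ ν_J(dz)` of the generator of a
jump-diffusion with finite jump activity, paired against a density `p`; both iterated
integrals are absolutely convergent. -/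
theorem jump_part_adjoint {d : ℕ}
    (f : EuclideanSpace ℝ (Fin d) → ℝ) (hf : ContDiff ℝ (⊤ : ℕ∞) f)
    (hfsupp : HasCompactSupport f)
    (lam p : EuclideanSpace ℝ (Fin d) → ℝ)
    (hlam : ContDiff ℝ 1 lam) (hp : ContDiff ℝ 1 p)
    (νJ : Measure (EuclideanSpace ℝ (Fin d))) [IsFiniteMeasure νJ]
    (hνJ : ∃ K : Set (EuclideanSpace ℝ (Fin d)), IsCompact K ∧ νJ Kᶜ = 0) :
    Integrable (fun x => lam x * p x *
      ∫ z, (∫ θ in (0:ℝ)..1, ⟪z, gradient f (x + θ • z)⟫) ∂νJ) ∧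
    Integrable (fun x => f x *
      ∫ z, (∫ θ in (0:ℝ)..1, ⟪z, gradient (fun y => lam y * p y) (x - θ • z)⟫) ∂νJ) ∧
    ∫ x, lam x * p x * ∫ z, (∫ θ in (0:ℝ)..1, ⟪z, gradient f (x + θ • z)⟫) ∂νJ =
      - ∫ x, f x *
        ∫ z, (∫ θ in (0:ℝ)..1, ⟪z, gradient (fun y => lam y * p y) (x - θ • z)⟫) ∂νJ := by
  classical
  obtain ⟨K, hK, hK0⟩ := hνJ
  set g : (EuclideanSpace ℝ (Fin d)) → ℝ := fun y => lam y * p y with hgdef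
  have hg : ContDiff ℝ 1 g := hlam.mul hp
  have hf1 : ContDiff ℝ 1 f := hf.of_le (by simp)
  have hfc : Continuous f := hf.continuous
  have hgc : Continuous g := hg.continuous
  -- bounds
  obtain ⟨Cf, hCf⟩ : ∃ C, ∀ x, ‖f x‖ ≤ C := hfsupp.exists_bound_of_continuous hfc
  have hS : IsCompact (tsupport f) := hfsupp
  set S := tsupport f with hSdef
  set D : Set (EuclideanSpace ℝ (Fin d)) := S ∪ (S + (-K)) with hDdef
  have hD : IsCompact D := hS.union (hS.add hK.neg)
  obtain ⟨Mg, hMg⟩ : ∃ C, ∀ x ∈ D, ‖g x‖ ≤ C :=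
    hD.exists_bound_of_continuousOn hgc.continuousOn
  -- the two product functions
  set H : (EuclideanSpace ℝ (Fin d)) × (EuclideanSpace ℝ (Fin d)) → ℝ := fun q => g q.1 * (f (q.1 + q.2) - f q.1) with hHdef
  set H2 : (EuclideanSpace ℝ (Fin d)) × (EuclideanSpace ℝ (Fin d)) → ℝ := fun q => f q.1 * (g q.1 - g (q.1 - q.2)) with hH2def
  have hHc : Continuous H :=
    (hgc.comp continuous_fst).mul
      (((hfc.comp (continuous_fst.add continuous_snd))).sub (hfc.comp continuous_fst))
  have hH2c : Continuous H2 :=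
    (hfc.comp continuous_fst).mul
      ((hgc.comp continuous_fst).sub (hgc.comp (continuous_fst.sub continuous_snd)))
  -- a.e. the second coordinate is in K
  have hae : ∀ᵐ q : (EuclideanSpace ℝ (Fin d)) × (EuclideanSpace ℝ (Fin d)) ∂(MeasureTheory.volume.prod νJ), q.2 ∈ K := by
    rw [MeasureTheory.ae_iff]
    have hset : {q : (EuclideanSpace ℝ (Fin d)) × (EuclideanSpace ℝ (Fin d)) | ¬ q.2 ∈ K} = (Set.univ : Set (EuclideanSpace ℝ (Fin d))) ×ˢ Kᶜ := by
      ext q; simp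
    rw [hset, MeasureTheory.Measure.prod_prod, hK0, mul_zero]
  -- integrability of H on the product
  have hHI : Integrable H (MeasureTheory.volume.prod νJ) := by
    apply MeasureTheory.Integrable.mono'
      (g := (D ×ˢ (Set.univ : Set (EuclideanSpace ℝ (Fin d)))).indicator (fun _ => Mg * (Cf + Cf)))
    · rw [integrable_indicator_iff (hD.measurableSet.prod MeasurableSet.univ)]
      refine integrableOn_const (ne_of_lt ?_) enorm_ne_top
      rw [MeasureTheory.Measure.prod_prod]
      exact ENNReal.mul_lt_top hD.measure_lt_top (measure_lt_top νJ Set.univ)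
    · exact hHc.aestronglyMeasurable
    · filter_upwards [hae] with q hq
      rcases q with ⟨x, z⟩
      by_cases hx : x ∈ D
      · have hmem : (x, z) ∈ D ×ˢ (Set.univ : Set (EuclideanSpace ℝ (Fin d))) := ⟨hx, trivial⟩
        rw [Set.indicator_of_mem hmem]
        have b1 : ‖f (x + z) - f x‖ ≤ Cf + Cf :=
          (norm_sub_le _ _).trans (add_le_add (hCf _) (hCf _))
        calc ‖H (x, z)‖ = ‖g x‖ * ‖f (x + z) - f x‖ := norm_mul _ _
          _ ≤ Mg * (Cf + Cf) := by
              apply mul_le_mul (hMg x hx) b1 (norm_nonneg _)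
              exact (norm_nonneg _).trans (hMg x hx)
      · have hmem : (x, z) ∉ D ×ˢ (Set.univ : Set (EuclideanSpace ℝ (Fin d))) := fun h => hx h.1
        rw [Set.indicator_of_notMem hmem]
        have hfx : f x = 0 := image_eq_zero_of_notMem_tsupport (fun h => hx (Or.inl h))
        have hfxz : f (x + z) = 0 := by
          apply image_eq_zero_of_notMem_tsupport
          intro h
          exact hx (Or.inr ⟨x + z, h, -z, Set.neg_mem_neg.2 hq, add_neg_cancel_right _ _⟩)
        simp [hHdef, hfx, hfxz]
  -- integrability of H2 on the product
  have hH2I : Integrable H2 (MeasureTheory.volume.prod νJ) := by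
    apply MeasureTheory.Integrable.mono'
      (g := (S ×ˢ (Set.univ : Set (EuclideanSpace ℝ (Fin d)))).indicator (fun _ => Cf * (Mg + Mg)))
    · rw [integrable_indicator_iff (hS.measurableSet.prod MeasurableSet.univ)]
      refine integrableOn_const (ne_of_lt ?_) enorm_ne_top
      rw [MeasureTheory.Measure.prod_prod]
      exact ENNReal.mul_lt_top hS.measure_lt_top (measure_lt_top νJ Set.univ)
    · exact hH2c.aestronglyMeasurable
    · filter_upwards [hae] with q hq
      rcases q with ⟨x, z⟩
      by_cases hx : x ∈ S
      · have hmem : (x, z) ∈ S ×ˢ (Set.univ : Set (EuclideanSpace ℝ (Fin d))) := ⟨hx, trivial⟩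
        rw [Set.indicator_of_mem hmem]
        have hxz : x - z ∈ D :=
          Or.inr ⟨x, hx, -z, Set.neg_mem_neg.2 hq, (sub_eq_add_neg x z).symm⟩
        have b1 : ‖g x - g (x - z)‖ ≤ Mg + Mg :=
          (norm_sub_le _ _).trans (add_le_add (hMg x (Or.inl hx)) (hMg _ hxz))
        calc ‖H2 (x, z)‖ = ‖f x‖ * ‖g x - g (x - z)‖ := norm_mul _ _
          _ ≤ Cf * (Mg + Mg) := by
              apply mul_le_mul (hCf x) b1 (norm_nonneg _)
              exact (norm_nonneg _).trans (hCf x)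
      · have hmem : (x, z) ∉ S ×ˢ (Set.univ : Set (EuclideanSpace ℝ (Fin d))) := fun h => hx h.1
        rw [Set.indicator_of_notMem hmem]
        have hfx : f x = 0 := image_eq_zero_of_notMem_tsupport hx
        simp [hH2def, hfx]
  -- per-z integrabilities on volume
  have i1 : ∀ z : (EuclideanSpace ℝ (Fin d)), Integrable (fun x : (EuclideanSpace ℝ (Fin d)) => g x * f (x + z)) := by
    intro z
    have s1 : HasCompactSupport (fun x : (EuclideanSpace ℝ (Fin d)) => f (x + z)) :=
      hfsupp.comp_homeomorph (Homeomorph.addRight z)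
    have c1 : Continuous (fun x : (EuclideanSpace ℝ (Fin d)) => g x * f (x + z)) :=
      hgc.mul (hfc.comp (continuous_id.add continuous_const))
    exact c1.integrable_of_hasCompactSupport (s1.mul_left)
  have i2 : Integrable (fun x : (EuclideanSpace ℝ (Fin d)) => g x * f x) :=
    (hgc.mul hfc).integrable_of_hasCompactSupport (hfsupp.mul_left)
  have i3 : ∀ z : (EuclideanSpace ℝ (Fin d)), Integrable (fun x : (EuclideanSpace ℝ (Fin d)) => f x * g (x - z)) := by
    intro z
    have c3 : Continuous (fun x : (EuclideanSpace ℝ (Fin d)) => f x * g (x - z)) :=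
      hfc.mul (hgc.comp (continuous_id.sub continuous_const))
    exact c3.integrable_of_hasCompactSupport (hfsupp.mul_right)
  have i4 : Integrable (fun x : (EuclideanSpace ℝ (Fin d)) => f x * g x) :=
    (hfc.mul hgc).integrable_of_hasCompactSupport (hfsupp.mul_right)
  -- per-z identity
  have eqz : ∀ z : (EuclideanSpace ℝ (Fin d)), (∫ x : (EuclideanSpace ℝ (Fin d)), g x * (f (x + z) - f x))
      = - ∫ x : (EuclideanSpace ℝ (Fin d)), f x * (g x - g (x - z)) := by
    intro z
    have t1 : (∫ x : (EuclideanSpace ℝ (Fin d)), g x * f (x + z)) = ∫ x : (EuclideanSpace ℝ (Fin d)), g (x - z) * f x := by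
      have := MeasureTheory.integral_add_right_eq_self
        (μ := (MeasureTheory.volume : Measure (EuclideanSpace ℝ (Fin d)))) (fun x => g (x - z) * f x) z
      simpa using this
    have t0 : (∫ x : (EuclideanSpace ℝ (Fin d)), g x * (f (x + z) - f x))
        = (∫ x : (EuclideanSpace ℝ (Fin d)), g x * f (x + z)) - ∫ x : (EuclideanSpace ℝ (Fin d)), g x * f x := by
      simp only [mul_sub]
      exact MeasureTheory.integral_sub (i1 z) i2
    have t2 : (∫ x : (EuclideanSpace ℝ (Fin d)), f x * (g x - g (x - z)))
        = (∫ x : (EuclideanSpace ℝ (Fin d)), f x * g x) - ∫ x : (EuclideanSpace ℝ (Fin d)), f x * g (x - z) := by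
      simp only [mul_sub]
      exact MeasureTheory.integral_sub i4 (i3 z)
    have t3 : (∫ x : (EuclideanSpace ℝ (Fin d)), g x * f x) = ∫ x : (EuclideanSpace ℝ (Fin d)), f x * g x := by
      congr 1; ext x; ring
    have t4 : (∫ x : (EuclideanSpace ℝ (Fin d)), g (x - z) * f x) = ∫ x : (EuclideanSpace ℝ (Fin d)), f x * g (x - z) := by
      congr 1; ext x; ring
    linarith [t0, t1, t2, t3, t4]
  -- rewrite the main integrands
  have main1 : (fun x : (EuclideanSpace ℝ (Fin d)) => lam x * p x *
      ∫ z, (∫ θ in (0:ℝ)..1, ⟪z, gradient f (x + θ • z)⟫) ∂νJ)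
      = fun x : (EuclideanSpace ℝ (Fin d)) => ∫ z, H (x, z) ∂νJ := by
    funext x
    show g x * _ = _
    rw [← MeasureTheory.integral_const_mul]
    apply MeasureTheory.integral_congr_ae
    filter_upwards with z
    rw [key_ftc f hf1 x z]
  have main2 : (fun x : (EuclideanSpace ℝ (Fin d)) => f x *
      ∫ z, (∫ θ in (0:ℝ)..1, ⟪z, gradient g (x - θ • z)⟫) ∂νJ)
      = fun x : (EuclideanSpace ℝ (Fin d)) => ∫ z, H2 (x, z) ∂νJ := by
    funext x
    rw [← MeasureTheory.integral_const_mul]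
    apply MeasureTheory.integral_congr_ae
    filter_upwards with z
    rw [key_ftc' g hg x z]
  refine ⟨?_, ?_, ?_⟩
  · rw [main1]
    exact hHI.integral_prod_left
  · rw [main2]
    exact hH2I.integral_prod_left
  · rw [main1, main2]
    calc (∫ x : (EuclideanSpace ℝ (Fin d)), ∫ z, H (x, z) ∂νJ)
        = ∫ z, (∫ x : (EuclideanSpace ℝ (Fin d)), H (x, z)) ∂νJ :=
          MeasureTheory.integral_integral_swap (f := fun x z => H (x, z)) hHI
      _ = ∫ z, (- ∫ x : (EuclideanSpace ℝ (Fin d)), H2 (x, z)) ∂νJ := by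
          apply MeasureTheory.integral_congr_ae
          filter_upwards with z
          exact eqz z
      _ = - ∫ z, (∫ x : (EuclideanSpace ℝ (Fin d)), H2 (x, z)) ∂νJ := MeasureTheory.integral_neg _
      _ = - ∫ x : (EuclideanSpace ℝ (Fin d)), ∫ z, H2 (x, z) ∂νJ := by
          rw [MeasureTheory.integral_integral_swap (f := fun x z => H2 (x, z)) hH2I]

end
end

section
/- Let λ : ℝ^d → ℝ and p : ℝ^d → ℝ be continuously differentiable, and let ν_J be a finite Borel measure on ℝ^d with compact support. Define the vector field I : ℝ^d → ℝ^d by I(x) = ∫_{ℝ^d} ∫_0^1 z λ(x - θz) p(x - θz) dθ ν_J(dz). Then I is continuously differentiable and its divergence satisfies div I(x) = ∫_{ℝ^d} ∫_0^1 z · ∇(λp)(x - θz) dθ ν_J(dz) for every x ∈ ℝ^d. In particular, if p is strictly positive, then the nonlocal term of the Lévy–Fokker–Planck equation equals the divergence div( b̂_J(x) p(x) ) of the pure drift b̂_J(x) = ∫_{ℝ^d} ∫_0^1 z λ(x - θz) p(x - θz)/p(x) dθ ν_J(dz) against the density p. -/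
open MeasureTheory Filter Set
open scoped RealInnerProductSpace

noncomputable section

/-- Partial derivative in the `i`-th coordinate direction of `ℝ^d`. -/
def pdv {d : ℕ} (i : Fin d) (f : EuclideanSpace ℝ (Fin d) → ℝ)
    (x : EuclideanSpace ℝ (Fin d)) : ℝ :=
  fderiv ℝ f x (EuclideanSpace.single i 1)

/-!
With `g = λ p`, the double integral defining `I` is a single integral of the kernel
`(x, z, θ) ↦ g (x - θ z) z` against `ν_J ⊗ dθ` over `K × [0, 1]`, `K` a compact set carrying
`ν_J`. The kernel is `C¹` in `x` with jointly continuous derivative `z ⊗ Dg (x - θ z)`, so the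
derivative passes under the integral sign and `I` is `C¹`. The divergence of `I` is the trace of
`DI`; the trace is linear, hence commutes with the integral, and the trace of the rank-one map
`z ⊗ Dg (y)` is `⟪z, ∇g (y)⟫`. The drift form only multiplies and divides by `p x > 0`.
-/

section ParametricIntegral

variable {E F Y : Type*} [NormedAddCommGroup E] [NormedSpace ℝ E] [FiniteDimensional ℝ E]
  [NormedAddCommGroup F] [NormedSpace ℝ F] [TopologicalSpace Y] [T2Space Y]
  [SecondCountableTopology Y] [MeasurableSpace Y] [OpensMeasurableSpace Y]
  {μ : Measure Y} [IsLocallyFiniteMeasure μ] {s : Set Y} {f : E → Y → F}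

theorem hasFDerivAt_setIntegral_of_continuous_fderiv (hs : IsCompact s)
    (hf : Continuous f.uncurry) (hdf : ∀ y, Differentiable ℝ (f · y))
    (hf' : Continuous fun q : E × Y => fderiv ℝ (f · q.2) q.1) (x₀ : E) :
    HasFDerivAt (fun x => ∫ y in s, f x y ∂μ) (∫ y in s, fderiv ℝ (f · y) x₀ ∂μ) x₀ := by
  obtain ⟨U, hU, hUx₀⟩ := exists_compact_mem_nhds x₀
  obtain ⟨M, hM⟩ := (hU.prod hs).bddAbove_image hf'.norm.continuousOn
  refine hasFDerivAt_integral_of_dominated_of_fderiv_le (F' := fun x y => fderiv ℝ (f · y) x)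
    (bound := fun _ => M) hUx₀
    (Eventually.of_forall fun x => (hf.comp (Continuous.prodMk_right x)).aestronglyMeasurable)
    ((hf.comp (Continuous.prodMk_right x₀)).continuousOn.integrableOn_compact hs)
    (hf'.comp (Continuous.prodMk_right x₀)).aestronglyMeasurable ?_
    (integrableOn_const hs.measure_ne_top) ?_
  · rw [ae_restrict_iff' hs.measurableSet]
    exact Eventually.of_forall fun y hy x hx => hM (mem_image_of_mem _ (mk_mem_prod hx hy))
  · exact Eventually.of_forall fun y x _ => (hdf y x).hasFDerivAt

theorem contDiff_one_setIntegral_of_continuous_fderiv (hs : IsCompact s)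
    (hf : Continuous f.uncurry) (hdf : ∀ y, Differentiable ℝ (f · y))
    (hf' : Continuous fun q : E × Y => fderiv ℝ (f · q.2) q.1) :
    ContDiff ℝ 1 (fun x => ∫ y in s, f x y ∂μ) := by
  have hD := hasFDerivAt_setIntegral_of_continuous_fderiv (μ := μ) hs hf hdf hf'
  rw [contDiff_one_iff_fderiv, funext fun x => (hD x).fderiv]
  exact ⟨fun x => (hD x).differentiableAt,
    continuous_parametric_integral_of_continuous (f := fun x y => fderiv ℝ (f · y) x) hf' hs⟩

end ParametricIntegral

theorem integral_intervalIntegral_eq_setIntegral_prod {X F : Type*} [TopologicalSpace X]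
    [T2Space X] [MeasurableSpace X] [OpensMeasurableSpace X] [NormedAddCommGroup F]
    [NormedSpace ℝ F] {ν : Measure X} [IsFiniteMeasure ν] {K : Set X}
    (hK : IsCompact K) (hνK : ν Kᶜ = 0) {a b : ℝ} (hab : a ≤ b) {h : X → ℝ → F}
    (hh : Continuous h.uncurry) :
    ∫ z, (∫ θ in a..b, h z θ) ∂ν = ∫ w in K ×ˢ Icc a b, h w.1 w.2 ∂(ν.prod volume) := by
  have hν : ν.restrict K = ν := Measure.restrict_eq_self_of_ae_mem (mem_ae_iff.mpr hνK)
  have hint : IntegrableOn (fun w : X × ℝ => h w.1 w.2) (K ×ˢ Icc a b) (ν.prod volume) :=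
    hh.continuousOn.integrableOn_compact (hK.prod isCompact_Icc)
  rw [IntegrableOn, ← Measure.prod_restrict] at hint
  rw [← Measure.prod_restrict, integral_prod _ hint, hν]
  simp only [integral_Icc_eq_integral_Ioc, intervalIntegral.integral_of_le hab]

section Kernel

variable {E : Type*} [NormedAddCommGroup E] [NormedSpace ℝ E] {g : E → ℝ}

theorem hasFDerivAt_comp_sub_smul_smul {x z : E} {θ : ℝ}
    (hg : DifferentiableAt ℝ g (x - θ • z)) :
    HasFDerivAt (fun y => g (y - θ • z) • z) ((fderiv ℝ g (x - θ • z)).smulRight z) x := by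
  simpa using (hg.hasFDerivAt.comp x ((hasFDerivAt_id x).sub_const (θ • z))).smul_const z

theorem continuous_fderiv_comp_sub_smul_smulRight (hg : Continuous (fderiv ℝ g)) :
    Continuous fun q : E × (E × ℝ) => (fderiv ℝ g (q.1 - q.2.2 • q.2.1)).smulRight q.2.1 :=
  isBoundedBilinearMap_smulRight.continuous.comp
    ((hg.comp (by fun_prop)).prodMk (by fun_prop))

end Kernel

theorem sum_pdv_eq_trace {d : ℕ} {I : EuclideanSpace ℝ (Fin d) → EuclideanSpace ℝ (Fin d)}
    {D : EuclideanSpace ℝ (Fin d) →L[ℝ] EuclideanSpace ℝ (Fin d)} {x : EuclideanSpace ℝ (Fin d)}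
    (h : HasFDerivAt I D x) :
    ∑ i, pdv i (fun y => I y i) x =
      LinearMap.trace ℝ _ (D : EuclideanSpace ℝ (Fin d) →ₗ[ℝ] EuclideanSpace ℝ (Fin d)) := by
  rw [LinearMap.trace_eq_matrix_trace ℝ (EuclideanSpace.basisFun (Fin d) ℝ).toBasis,
    Matrix.trace]
  refine Finset.sum_congr rfl fun i _ => ?_
  have hi : HasFDerivAt (fun y => I y i) ((EuclideanSpace.proj (𝕜 := ℝ) i).comp D) x :=
    (EuclideanSpace.proj (𝕜 := ℝ) i).hasFDerivAt.comp x h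
  rw [pdv, hi.fderiv]
  simp [LinearMap.toMatrix_apply]

namespace ContinuousLinearMap

variable {E : Type*} [NormedAddCommGroup E] [NormedSpace ℝ E] [FiniteDimensional ℝ E]

theorem trace_integral {Y : Type*} [MeasurableSpace Y] {μ : Measure Y} {L : Y → E →L[ℝ] E}
    (hL : Integrable L μ) :
    LinearMap.trace ℝ E (∫ y, L y ∂μ : E →L[ℝ] E) = ∫ y, LinearMap.trace ℝ E (L y) ∂μ :=
  ((LinearMap.trace ℝ E ∘ₗ coeLM ℝ).toContinuousLinearMap.integral_comp_comm hL).symm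

theorem trace_smulRight (f : E →L[ℝ] ℝ) (z : E) :
    LinearMap.trace ℝ E (f.smulRight z : E →L[ℝ] E) = f z :=
  LinearMap.trace_smulRight (f : E →ₗ[ℝ] ℝ) z

end ContinuousLinearMap

/-- The vector field `I(x) = ∫∫₀¹ z λ(x-θz) p(x-θz) dθ ν_J(dz)` is C¹ and
`div I(x) = ∫∫₀¹ z·∇(λp)(x-θz) dθ ν_J(dz)`; in particular, if `p > 0`, the nonlocal
term of the Lévy–Fokker–Planck equation is the divergence of the drift
`b̂_J(x) = ∫∫₀¹ z λ(x-θz) p(x-θz)/p(x) dθ ν_J(dz)` against the density `p`. -/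
theorem nonlocal_term_as_divergence {d : ℕ}
    (lam p : EuclideanSpace ℝ (Fin d) → ℝ)
    (hlam : ContDiff ℝ 1 lam) (hp : ContDiff ℝ 1 p)
    (νJ : Measure (EuclideanSpace ℝ (Fin d))) [IsFiniteMeasure νJ]
    (hνJ : ∃ K : Set (EuclideanSpace ℝ (Fin d)), IsCompact K ∧ νJ Kᶜ = 0)
    (I : EuclideanSpace ℝ (Fin d) → EuclideanSpace ℝ (Fin d))
    (hI : I = fun x =>
      ∫ z, (∫ θ in (0:ℝ)..1, (lam (x - θ • z) * p (x - θ • z)) • z) ∂νJ) :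
    ContDiff ℝ 1 I ∧
    (∀ x, ∑ i, pdv i (fun y => I y i) x =
      ∫ z, (∫ θ in (0:ℝ)..1,
        ⟪z, gradient (fun y => lam y * p y) (x - θ • z)⟫) ∂νJ) ∧
    ((∀ x, 0 < p x) → ∀ x, I x =
      p x • ∫ z, (∫ θ in (0:ℝ)..1,
        (lam (x - θ • z) * p (x - θ • z) / p x) • z) ∂νJ) := by
  obtain ⟨K, hK, hνK⟩ := hνJ
  have hs : IsCompact (K ×ˢ Icc (0:ℝ) 1) := hK.prod isCompact_Icc
  set g := fun y => lam y * p y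
  have hg : ContDiff ℝ 1 g := hlam.mul hp
  set f := fun (x : EuclideanSpace ℝ (Fin d)) (w : EuclideanSpace ℝ (Fin d) × ℝ) =>
    g (x - w.2 • w.1) • w.1
  have hf : Continuous f.uncurry := by fun_prop
  have hfderiv (x w) : HasFDerivAt (f · w) ((fderiv ℝ g (x - w.2 • w.1)).smulRight w.1) x :=
    hasFDerivAt_comp_sub_smul_smul (hg.differentiable one_ne_zero _)
  have hdf (w) : Differentiable ℝ (f · w) := fun x => (hfderiv x w).differentiableAt
  have hf' : Continuous fun q : _ × _ => fderiv ℝ (f · q.2) q.1 := by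
    simpa only [fun x w => (hfderiv x w).fderiv] using
      continuous_fderiv_comp_sub_smul_smulRight (hg.continuous_fderiv one_ne_zero)
  have hIs : I = fun x => ∫ w in K ×ˢ Icc 0 1, f x w ∂(νJ.prod volume) :=
    hI.trans (funext fun x =>
      integral_intervalIntegral_eq_setIntegral_prod hK hνK zero_le_one (by fun_prop))
  refine ⟨hIs ▸ contDiff_one_setIntegral_of_continuous_fderiv hs hf hdf hf',
    fun x => ?_, fun hpos x => ?_⟩
  · have hD := hIs ▸ hasFDerivAt_setIntegral_of_continuous_fderiv (μ := νJ.prod volume)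
      hs hf hdf hf' x
    rw [sum_pdv_eq_trace hD, ContinuousLinearMap.trace_integral]
    · simp only [inner_gradient_right, conj_trivial]
      rw [integral_intervalIntegral_eq_setIntegral_prod hK hνK zero_le_one (by fun_prop)]
      simp only [fun w => (hfderiv x w).fderiv, ContinuousLinearMap.trace_smulRight]
    · exact (hf'.comp (Continuous.prodMk_right x)).continuousOn.integrableOn_compact hs
  · rw [hI, ← integral_smul]
    refine integral_congr_ae (Eventually.of_forall fun z => ?_)
    simp only [← intervalIntegral.integral_smul, smul_smul, mul_div_cancel₀ _ (hpos x).ne']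

end
end

section
/- Let λ, b_1, …, b_d : ℝ^d → ℝ be continuously differentiable, σ ∈ ℝ, and let ν_J be a finite Borel measure on ℝ^d with compact support. Let p : ℝ^d × (0,∞) → (0,∞) be strictly positive, twice continuously differentiable in x, and differentiable in t. Then p satisfies the Lévy–Fokker–Planck equation ∂_t p(x,t) = - Σ_i ∂_i( b_i(x) p(x,t) ) + (σ²/2) Δ_x p(x,t) - ∫_{ℝ^d} ∫_0^1 z · ∇_x( λ(·) p(·,t) )(x - θz) dθ ν_J(dz) for all (x,t) if and only if p satisfies the Fokker–Planck (continuity) equation ∂_t p(x,t) = - Σ_i ∂_i( b̂_i(x,t) p(x,t) ) + (σ²/2) Δ_x p(x,t) for all (x,t), where b̂(x,t) = b(x) + ∫_{ℝ^d} ∫_0^1 z λ(x - θz) p(x - θz, t)/p(x,t) dθ ν_J(dz). -/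
open MeasureTheory Filter Set
open scoped RealInnerProductSpace

noncomputable section

/-!
Multiplying the modified drift `b̂(·,t)` by `p(·,t)` cancels the denominator, so the flux
`b̂ p` is `b p` plus the jump flux `y ↦ ∫∫₀¹ z λ(y - θz) p(y - θz, t) dθ ν_J(dz)`. Since `ν_J` is
finite and compactly supported, the jump flux may be differentiated under the integral sign, and
its divergence is `∫∫₀¹ Σᵢ zᵢ ∂ᵢ(λp)(x - θz) = ∫∫₀¹ z · ∇(λp)(x - θz)`, the nonlocal term of the
Lévy–Fokker–Planck equation. Hence the right-hand sides of the two equations agree pointwise.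
-/

open Metric InnerProductSpace

theorem Continuous.integrable_of_ae_mem_compact {X G : Type*} [TopologicalSpace X] [T2Space X]
    [MeasurableSpace X] [OpensMeasurableSpace X] [NormedAddCommGroup G] {μ : Measure X}
    [IsFiniteMeasure μ] {S : Set X} (hS : IsCompact S) (hμS : ∀ᵐ a ∂μ, a ∈ S) {f : X → G}
    (hf : Continuous f) : Integrable f μ := by
  rw [← Measure.restrict_eq_self_of_ae_mem hμS]
  exact hf.continuousOn.integrableOn_compact hS

theorem hasFDerivAt_integral_comp_sub_mul {X E : Type*} [TopologicalSpace X] [T2Space X]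
    [SecondCountableTopology X] [MeasurableSpace X] [OpensMeasurableSpace X]
    [NormedAddCommGroup E] [NormedSpace ℝ E] [ProperSpace E]
    {μ : Measure X} [IsFiniteMeasure μ] {S : Set X} (hS : IsCompact S) (hμS : ∀ᵐ a ∂μ, a ∈ S)
    {s : X → E} (hs : Continuous s) {w : X → ℝ} (hw : Continuous w) {g : E → ℝ}
    (hg : ContDiff ℝ 1 g) (x : E) :
    HasFDerivAt (fun y => ∫ a, g (y - s a) * w a ∂μ) (∫ a, w a • fderiv ℝ g (x - s a) ∂μ) x := by
  have hDg : Continuous (fderiv ℝ g) := hg.continuous_fderiv one_ne_zero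
  have hF : ∀ y, Continuous fun a => g (y - s a) * w a := fun y =>
    (hg.continuous.comp (continuous_const.sub hs)).mul hw
  obtain ⟨C, hC⟩ := ((isCompact_closedBall x 1).prod hS).exists_bound_of_continuousOn
    (f := fun q : E × X => w q.2 • fderiv ℝ g (q.1 - s q.2))
    ((hw.comp continuous_snd).smul
      (hDg.comp (continuous_fst.sub (hs.comp continuous_snd)))).continuousOn
  refine hasFDerivAt_integral_of_dominated_of_fderiv_le (ball_mem_nhds x one_pos)
    (F' := fun y a => w a • fderiv ℝ g (y - s a)) (bound := fun _ => C)
    (Eventually.of_forall fun y => (hF y).aestronglyMeasurable)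
    ((hF x).integrable_of_ae_mem_compact hS hμS)
    (hw.smul (hDg.comp (continuous_const.sub hs))).aestronglyMeasurable ?_ (integrable_const C) ?_
  · filter_upwards [hμS] with a ha y hy using hC (y, a) ⟨ball_subset_closedBall hy, ha⟩
  · refine Eventually.of_forall fun a y _ => ?_
    exact ((hg.differentiable one_ne_zero _).hasFDerivAt.comp y
      ((hasFDerivAt_id y).sub_const (s a))).mul_const (w a)

theorem ae_mem_prod_Icc {Z : Type*} [MeasurableSpace Z] {ν : Measure Z} {K : Set Z}
    (hνK : ∀ᵐ z ∂ν, z ∈ K) :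
    ∀ᵐ a ∂ν.prod (volume.restrict (Ioc (0 : ℝ) 1)), a ∈ K ×ˢ Icc 0 1 := by
  filter_upwards [Measure.quasiMeasurePreserving_fst.ae hνK,
    Measure.quasiMeasurePreserving_snd.ae (ae_restrict_mem measurableSet_Ioc)] with a h1 h2
  exact ⟨h1, Ioc_subset_Icc_self h2⟩

theorem integral_prod_restrict_Ioc {Z G : Type*} [MeasurableSpace Z] [NormedAddCommGroup G]
    [NormedSpace ℝ G] {ν : Measure Z} [SFinite ν] {f : Z × ℝ → G}
    (hf : Integrable f (ν.prod (volume.restrict (Ioc (0 : ℝ) 1)))) :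
    ∫ a, f a ∂ν.prod (volume.restrict (Ioc (0 : ℝ) 1))
      = ∫ z, (∫ θ in (0 : ℝ)..1, f (z, θ)) ∂ν := by
  rw [integral_prod _ hf]
  simp_rw [intervalIntegral.integral_of_le zero_le_one]

section Euclidean

variable {d : ℕ}

theorem ContDiff.continuous_pdv {g : EuclideanSpace ℝ (Fin d) → ℝ} (hg : ContDiff ℝ 1 g)
    (i : Fin d) :
    Continuous (pdv i g) :=
  (hg.continuous_fderiv one_ne_zero).clm_apply continuous_const

theorem pdv_add {f g : EuclideanSpace ℝ (Fin d) → ℝ} {x : EuclideanSpace ℝ (Fin d)}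
    (hf : DifferentiableAt ℝ f x) (hg : DifferentiableAt ℝ g x) (i : Fin d) :
    pdv i (fun y => f y + g y) x = pdv i f x + pdv i g x := by
  simp only [pdv, fderiv_fun_add hf hg, add_apply]

theorem sum_mul_pdv_eq_inner_gradient (g : EuclideanSpace ℝ (Fin d) → ℝ)
    (y z : EuclideanSpace ℝ (Fin d)) :
    ∑ i, z i * pdv i g y = ⟪z, gradient g y⟫ := by
  conv_rhs => rw [inner_gradient_right, conj_trivial,
    ← (EuclideanSpace.basisFun (Fin d) ℝ).sum_repr z, map_sum]
  simp [pdv]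

theorem pdv_integral_comp_sub_mul {X : Type*} [TopologicalSpace X] [T2Space X]
    [SecondCountableTopology X] [MeasurableSpace X] [OpensMeasurableSpace X]
    {μ : Measure X} [IsFiniteMeasure μ] {S : Set X} (hS : IsCompact S) (hμS : ∀ᵐ a ∂μ, a ∈ S)
    {s : X → EuclideanSpace ℝ (Fin d)} (hs : Continuous s) {w : X → ℝ} (hw : Continuous w)
    {g : EuclideanSpace ℝ (Fin d) → ℝ} (hg : ContDiff ℝ 1 g) (i : Fin d)
    (x : EuclideanSpace ℝ (Fin d)) :
    pdv i (fun y => ∫ a, g (y - s a) * w a ∂μ) x = ∫ a, pdv i g (x - s a) * w a ∂μ := by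
  rw [pdv, (hasFDerivAt_integral_comp_sub_mul hS hμS hs hw hg x).fderiv,
    ContinuousLinearMap.integral_apply]
  · simp only [pdv, smul_apply, smul_eq_mul, mul_comm]
  · exact (hw.smul ((hg.continuous_fderiv one_ne_zero).comp (continuous_const.sub hs))
      ).integrable_of_ae_mem_compact hS hμS

variable {ν : Measure (EuclideanSpace ℝ (Fin d))} [IsFiniteMeasure ν]
  {K : Set (EuclideanSpace ℝ (Fin d))}

theorem jumpFlux_eq_integral_prod (hK : IsCompact K) (hνK : ∀ᵐ z ∂ν, z ∈ K)
    {g : EuclideanSpace ℝ (Fin d) → ℝ} (hg : Continuous g) (i : Fin d) :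
    (fun y => ∫ z, (∫ θ in (0 : ℝ)..1, g (y - θ • z) * z i) ∂ν)
      = fun y => ∫ a, g (y - a.2 • a.1) * a.1 i
          ∂ν.prod (volume.restrict (Ioc (0 : ℝ) 1)) := by
  funext y
  exact (integral_prod_restrict_Ioc (f := fun a => g (y - a.2 • a.1) * a.1 i)
    (Continuous.integrable_of_ae_mem_compact (hK.prod isCompact_Icc) (ae_mem_prod_Icc hνK)
      (by fun_prop))).symm

theorem sum_pdv_jumpFlux (hK : IsCompact K) (hνK : ∀ᵐ z ∂ν, z ∈ K)
    {g : EuclideanSpace ℝ (Fin d) → ℝ} (hg : ContDiff ℝ 1 g) (x : EuclideanSpace ℝ (Fin d)) :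
    ∑ i, pdv i (fun y => ∫ z, (∫ θ in (0 : ℝ)..1, g (y - θ • z) * z i) ∂ν) x
      = ∫ z, (∫ θ in (0 : ℝ)..1, ⟪z, gradient g (x - θ • z)⟫) ∂ν := by
  set μ := ν.prod (volume.restrict (Ioc (0 : ℝ) 1))
  have hS := hK.prod (isCompact_Icc (a := (0 : ℝ)) (b := 1))
  have hμS : ∀ᵐ a ∂μ, a ∈ K ×ˢ Icc 0 1 := ae_mem_prod_Icc hνK
  have hs : Continuous fun a : EuclideanSpace ℝ (Fin d) × ℝ => a.2 • a.1 := by fun_prop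
  have hcoord : ∀ i, Continuous fun a : EuclideanSpace ℝ (Fin d) × ℝ => a.1 i := fun i => by
    fun_prop
  have hgrad : Continuous (gradient g) :=
    (toDual ℝ (EuclideanSpace ℝ (Fin d))).symm.continuous.comp (hg.continuous_fderiv one_ne_zero)
  calc ∑ i, pdv i (fun y => ∫ z, (∫ θ in (0 : ℝ)..1, g (y - θ • z) * z i) ∂ν) x
      = ∑ i, ∫ a, pdv i g (x - a.2 • a.1) * a.1 i ∂μ := by
        refine Finset.sum_congr rfl fun i _ => ?_
        rw [jumpFlux_eq_integral_prod hK hνK hg.continuous,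
          pdv_integral_comp_sub_mul hS hμS hs (hcoord i) hg]
    _ = ∫ a, ∑ i, a.1 i * pdv i g (x - a.2 • a.1) ∂μ := by
        rw [integral_finsetSum]
        · simp_rw [mul_comm]
        · exact fun i _ => Continuous.integrable_of_ae_mem_compact hS hμS
            ((hcoord i).mul ((hg.continuous_pdv i).comp (continuous_const.sub hs)))
    _ = ∫ a, ⟪a.1, gradient g (x - a.2 • a.1)⟫ ∂μ := by
        simp_rw [sum_mul_pdv_eq_inner_gradient]
    _ = ∫ z, (∫ θ in (0 : ℝ)..1, ⟪z, gradient g (x - θ • z)⟫) ∂ν :=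
        integral_prod_restrict_Ioc (Continuous.integrable_of_ae_mem_compact hS hμS (by fun_prop))

theorem sum_pdv_modifiedDrift_mul (hK : IsCompact K) (hνK : ∀ᵐ z ∂ν, z ∈ K)
    {b : EuclideanSpace ℝ (Fin d) → EuclideanSpace ℝ (Fin d)} (hb : ContDiff ℝ 1 b)
    {lam q : EuclideanSpace ℝ (Fin d) → ℝ} (hlam : ContDiff ℝ 1 lam) (hq : ContDiff ℝ 1 q)
    (hq_pos : ∀ y, 0 < q y) (x : EuclideanSpace ℝ (Fin d)) :
    ∑ i, pdv i (fun y => (b y i + ∫ z, (∫ θ in (0 : ℝ)..1,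
        lam (y - θ • z) * q (y - θ • z) / q y * z i) ∂ν) * q y) x
      = ∑ i, pdv i (fun y => b y i * q y) x
        + ∫ z, (∫ θ in (0 : ℝ)..1, ⟪z, gradient (fun y => lam y * q y) (x - θ • z)⟫) ∂ν := by
  set g := fun y => lam y * q y
  have hg : ContDiff ℝ 1 g := hlam.mul hq
  have hflux : ∀ i y, (b y i + ∫ z, (∫ θ in (0 : ℝ)..1,
      lam (y - θ • z) * q (y - θ • z) / q y * z i) ∂ν) * q y
        = b y i * q y + ∫ z, (∫ θ in (0 : ℝ)..1, g (y - θ • z) * z i) ∂ν := by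
    intro i y
    rw [add_mul, ← integral_mul_const]
    congr 1
    refine integral_congr_ae (Eventually.of_forall fun z => ?_)
    simp only [← intervalIntegral.integral_mul_const]
    refine intervalIntegral.integral_congr fun θ _ => ?_
    simp only [g]
    field_simp [(hq_pos y).ne']
  have hdiff_flux : ∀ i, DifferentiableAt ℝ
      (fun y => ∫ z, (∫ θ in (0 : ℝ)..1, g (y - θ • z) * z i) ∂ν) x := by
    intro i
    rw [jumpFlux_eq_integral_prod hK hνK hg.continuous]
    exact (hasFDerivAt_integral_comp_sub_mul (hK.prod isCompact_Icc) (ae_mem_prod_Icc hνK)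
      (by fun_prop) (by fun_prop) hg x).differentiableAt
  have hdiff_drift : ∀ i, DifferentiableAt ℝ (fun y => b y i * q y) x := fun i =>
    ((contDiff_euclidean.mp hb i).differentiable one_ne_zero x).mul
      (hq.differentiable one_ne_zero x)
  simp_rw [hflux, pdv_add (hdiff_drift _) (hdiff_flux _), Finset.sum_add_distrib,
    sum_pdv_jumpFlux hK hνK hg]

end Euclidean

theorem levyFokkerPlanck_iff_fokkerPlanck_general {d : ℕ}
    (lam : EuclideanSpace ℝ (Fin d) → ℝ)
    (b : EuclideanSpace ℝ (Fin d) → EuclideanSpace ℝ (Fin d))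
    (hlam : ContDiff ℝ 1 lam) (hb : ContDiff ℝ 1 b) (σ : ℝ)
    (νJ : Measure (EuclideanSpace ℝ (Fin d))) [IsFiniteMeasure νJ]
    (hνJ : ∃ K : Set (EuclideanSpace ℝ (Fin d)), IsCompact K ∧ νJ Kᶜ = 0)
    (p : EuclideanSpace ℝ (Fin d) → ℝ → ℝ)
    (hpos : ∀ x t, 0 < t → 0 < p x t)
    (hpx : ∀ t : ℝ, 0 < t → ContDiff ℝ 2 (fun x => p x t)) :
    (∀ x t, 0 < t →
      deriv (p x) t =
        -(∑ i, pdv i (fun y => b y i * p y t) x)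
          + σ ^ 2 / 2 * ∑ i, pdv i (fun y => pdv i (fun w => p w t) y) x
          - ∫ z, (∫ θ in (0:ℝ)..1,
              ⟪z, gradient (fun y => lam y * p y t) (x - θ • z)⟫) ∂νJ)
    ↔ (∀ x t, 0 < t →
      deriv (p x) t =
        -(∑ i, pdv i (fun y =>
            (b y i + ∫ z, (∫ θ in (0:ℝ)..1,
              lam (y - θ • z) * p (y - θ • z) t / p y t * z i) ∂νJ) * p y t) x)
          + σ ^ 2 / 2 * ∑ i, pdv i (fun y => pdv i (fun w => p w t) y) x) := by
  obtain ⟨K, hK, hK_null⟩ := hνJ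
  refine forall₃_congr fun x t ht => ?_
  rw [sum_pdv_modifiedDrift_mul hK (ae_iff.mpr hK_null) hb hlam ((hpx t ht).of_le one_le_two)
    (fun y => hpos y t ht) x]
  constructor <;> intro h <;> rw [h] <;> ring

/-- Probability-flow equivalence at the PDE level: a positive density
`p(x,t)` solves the Lévy–Fokker–Planck equation of a jump-diffusion with finite jump
activity iff it solves the Fokker–Planck (continuity) equation of an Itô diffusion
with the modified drift
`b̂(x,t) = b(x) + ∫∫₀¹ z λ(x-θz) p(x-θz,t)/p(x,t) dθ ν_J(dz)`. -/
theorem levyFokkerPlanck_iff_fokkerPlanck {d : ℕ}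
    (lam : EuclideanSpace ℝ (Fin d) → ℝ)
    (b : EuclideanSpace ℝ (Fin d) → EuclideanSpace ℝ (Fin d))
    (hlam : ContDiff ℝ 1 lam) (hb : ContDiff ℝ 1 b) (σ : ℝ)
    (νJ : Measure (EuclideanSpace ℝ (Fin d))) [IsFiniteMeasure νJ]
    (hνJ : ∃ K : Set (EuclideanSpace ℝ (Fin d)), IsCompact K ∧ νJ Kᶜ = 0)
    (p : EuclideanSpace ℝ (Fin d) → ℝ → ℝ)
    (hpos : ∀ x t, 0 < t → 0 < p x t)
    (hpx : ∀ t : ℝ, 0 < t → ContDiff ℝ 2 (fun x => p x t))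
    (hpt : ∀ x t, 0 < t → DifferentiableAt ℝ (p x) t) :
    (∀ x t, 0 < t →
      deriv (p x) t =
        -(∑ i, pdv i (fun y => b y i * p y t) x)
          + σ ^ 2 / 2 * ∑ i, pdv i (fun y => pdv i (fun w => p w t) y) x
          - ∫ z, (∫ θ in (0:ℝ)..1,
              ⟪z, gradient (fun y => lam y * p y t) (x - θ • z)⟫) ∂νJ)
    ↔ (∀ x t, 0 < t →
      deriv (p x) t =
        -(∑ i, pdv i (fun y =>
            (b y i + ∫ z, (∫ θ in (0:ℝ)..1,
              lam (y - θ • z) * p (y - θ • z) t / p y t * z i) ∂νJ) * p y t) x)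
          + σ ^ 2 / 2 * ∑ i, pdv i (fun y => pdv i (fun w => p w t) y) x) :=
  levyFokkerPlanck_iff_fokkerPlanck_general lam b hlam hb σ νJ hνJ p hpos hpx
end
end
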